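/- Let G be a finite graph, β ∈ (0,∞), η a field realization, A, S ⊆ V(G), and τ, τ′ : A → {−1,+1}. Define the swap map R_S^A on pairs of extended configurations (σ̄, σ̄′) as follows: if the union C_S of connected components of the disagreement set D(σ̄,σ̄′) meeting S intersects A, R_S^A is the identity; otherwise R_S^A exchanges the values of σ̄ and σ̄′ at every site of C_S and leaves them unchanged elsewhere. Then the product measure P̄_Ḡ^{A,τ} ⊗ P̄_Ḡ^{A,τ′} is invariant under R_S^A. -/

import Mathlib

open MeasureTheory ProbabilityTheory Real BigOperators
open scoped Classical

noncomputable section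
namespace RFIM

/-- The two-point spin space `{-1,+1} ⊂ ℤ`. -/
abbrev Spin : Type := ({-1, 1} : Finset ℤ)
/-- The mid-edge value space `{-1,0,+1} ⊂ ℤ`. -/
abbrev Mid : Type := ({-1, 0, 1} : Finset ℤ)

/-- The real value of a spin. -/
def spinR (s : Spin) : ℝ := ((s : ℤ) : ℝ)

/-- The `+1` spin. -/
def pl : Spin := ⟨1, by decide⟩
/-- The `-1` spin. -/
def mn : Spin := ⟨-1, by decide⟩

section GeneralGraph

variable {V : Type} [Fintype V] [DecidableEq V]

/-- Energy `J σ_u σ_v` carried by an (unordered) edge. -/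
def edgeE (J : ℝ) (σ : V → Spin) : Sym2 V → ℝ :=
  Sym2.lift ⟨fun u v => J * spinR (σ u) * spinR (σ v), fun _ _ => by ring⟩

/-- The RFIM Hamiltonian `H(σ) = -∑_{e} J σ_u σ_v - ∑_v (h + ε η_v) σ_v` on a finite graph. -/
def hamG (G : SimpleGraph V) [DecidableRel G.Adj] (J h ε : ℝ) (η : V → ℝ) (σ : V → Spin) : ℝ :=
  - ∑ e ∈ G.edgeFinset, edgeE J σ e - ∑ v, (h + ε * η v) * spinR (σ v)

/-- Partition function restricted to configurations agreeing with `τ` on `A`. -/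
def ZG (G : SimpleGraph V) [DecidableRel G.Adj] (J h ε β : ℝ) (η : V → ℝ)
    (A : Finset V) (τ : V → Spin) : ℝ :=
  ∑ σ : V → Spin,
    if ∀ v ∈ A, σ v = τ v then Real.exp (-(β * hamG G J h ε η σ)) else 0

/-- Thermal expectation of `f` under the Gibbs measure conditioned on `{σ = τ on A}`. -/
def thermalG (G : SimpleGraph V) [DecidableRel G.Adj] (J h ε β : ℝ) (η : V → ℝ)
    (A : Finset V) (τ : V → Spin) (f : (V → Spin) → ℝ) : ℝ :=
  (∑ σ : V → Spin,
    if ∀ v ∈ A, σ v = τ v then f σ * Real.exp (-(β * hamG G J h ε η σ)) else 0) /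
    ZG G J h ε β η A τ

/-- Partition function with spins constrained to the constant value `s₁` on `A₁`
and `s₂` on `A₂`. -/
def Z2G (G : SimpleGraph V) [DecidableRel G.Adj] (J h ε β : ℝ) (η : V → ℝ)
    (A₁ A₂ : Finset V) (s₁ s₂ : Spin) : ℝ :=
  ∑ σ : V → Spin,
    if (∀ v ∈ A₁, σ v = s₁) ∧ (∀ v ∈ A₂, σ v = s₂) then
      Real.exp (-(β * hamG G J h ε η σ)) else 0

/-- Internal vertex boundary of `Λ` in the graph `G`. -/
def vbdryG (G : SimpleGraph V) [DecidableRel G.Adj] (Λ : Finset V) : Finset V :=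
  Λ.filter fun v => ¬ G.neighborFinset v ⊆ Λ

/-- The surface tension `β⁻¹ log (Z^{++} Z^{--} / (Z^{+-} Z^{-+}))` between the internal
vertex boundaries of `Λ₁` and `Λ₂`. -/
def surfTG (G : SimpleGraph V) [DecidableRel G.Adj] (J h ε β : ℝ) (η : V → ℝ)
    (Λ₁ Λ₂ : Finset V) : ℝ :=
  β⁻¹ * Real.log
    ((Z2G G J h ε β η (vbdryG G Λ₁) (vbdryG G Λ₂) pl pl *
      Z2G G J h ε β η (vbdryG G Λ₁) (vbdryG G Λ₂) mn mn) /
     (Z2G G J h ε β η (vbdryG G Λ₁) (vbdryG G Λ₂) pl mn *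
      Z2G G J h ε β η (vbdryG G Λ₁) (vbdryG G Λ₂) mn pl))

end GeneralGraph
section ExtendedModel

variable {V : Type} [Fintype V] [DecidableEq V]

/-- `t = (e^{2Jβ} - 1)^{-1/2}`. -/
def tpar (J β : ℝ) : ℝ := (Real.sqrt (Real.exp (2 * J * β) - 1))⁻¹
/-- `λ = (2 sinh (Jβ))^{1/2}`. -/
def lampar (J β : ℝ) : ℝ := Real.sqrt (2 * Real.sinh (J * β))

/-- The weight `W(a,b) = λ (δ_{a,b} + t δ_{b,0})`. -/
def Wgt (J β : ℝ) (a b : ℤ) : ℝ :=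
  lampar J β * ((if a = b then 1 else 0) + tpar J β * (if b = 0 then 1 else 0))

/-- The product `W(σ_u, k) W(σ_v, k)` over the two endpoints of an edge. -/
def edgeW (J β : ℝ) (σ : V → Spin) (k : ℤ) : Sym2 V → ℝ :=
  Sym2.lift ⟨fun u v => Wgt J β (σ u : ℤ) k * Wgt J β (σ v : ℤ) k, fun _ _ => mul_comm _ _⟩

/-- The weight of an extended configuration `(σ, κ)`:
`∏_{e ∈ E(G)} ∏_{v ∈ e} W(σ_v, κ_e) · e^{-β ∑_v (h + ε η_v) σ_v}`. -/
def extWeight (G : SimpleGraph V) [DecidableRel G.Adj] (J h ε β : ℝ) (η : V → ℝ)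
    (σ : V → Spin) (κ : G.edgeFinset → Mid) : ℝ :=
  (∏ e : G.edgeFinset, edgeW J β σ (κ e : ℤ) (e : Sym2 V)) *
    Real.exp (-(β * ∑ v, (h + ε * η v) * spinR (σ v)))

/-- Extended partition function restricted to vertex configurations agreeing with `τ` on `A`. -/
def extZ (G : SimpleGraph V) [DecidableRel G.Adj] (J h ε β : ℝ) (η : V → ℝ)
    (A : Finset V) (τ : V → Spin) : ℝ :=
  ∑ σ : V → Spin, ∑ κ : G.edgeFinset → Mid,
    if ∀ v ∈ A, σ v = τ v then extWeight G J h ε β η σ κ else 0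

/-- Extended partition function with vertex spins constrained to the constant `s₁` on `A₁`
and `s₂` on `A₂`. -/
def extZ2 (G : SimpleGraph V) [DecidableRel G.Adj] (J h ε β : ℝ) (η : V → ℝ)
    (A₁ A₂ : Finset V) (s₁ s₂ : Spin) : ℝ :=
  ∑ σ : V → Spin, ∑ κ : G.edgeFinset → Mid,
    if (∀ v ∈ A₁, σ v = s₁) ∧ (∀ v ∈ A₂, σ v = s₂) then extWeight G J h ε β η σ κ else 0

/-- Probability of the extended configuration `(σ,κ)` under the extended measure
conditioned on `{σ = τ on A}`. -/
def extProb (G : SimpleGraph V) [DecidableRel G.Adj] (J h ε β : ℝ) (η : V → ℝ)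
    (A : Finset V) (τ : V → Spin) (σ : V → Spin) (κ : G.edgeFinset → Mid) : ℝ :=
  (if ∀ v ∈ A, σ v = τ v then extWeight G J h ε β η σ κ else 0) / extZ G J h ε β η A τ

/-- Expectation of `F` under the product of the extended measures conditioned on
`{σ = τ on A}` and `{σ' = τ' on A}` respectively. -/
def extExp2 (G : SimpleGraph V) [DecidableRel G.Adj] (J h ε β : ℝ) (η : V → ℝ)
    (A : Finset V) (τ τ' : V → Spin)
    (F : (V → Spin) → (G.edgeFinset → Mid) → (V → Spin) → (G.edgeFinset → Mid) → ℝ) : ℝ :=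
  (∑ σ : V → Spin, ∑ κ : G.edgeFinset → Mid, ∑ σ' : V → Spin, ∑ κ' : G.edgeFinset → Mid,
      if (∀ v ∈ A, σ v = τ v) ∧ (∀ v ∈ A, σ' v = τ' v) then
        F σ κ σ' κ' * extWeight G J h ε β η σ κ * extWeight G J h ε β η σ' κ' else 0) /
    (extZ G J h ε β η A τ * extZ G J h ε β η A τ')

/-- The extended graph: vertices of `G` together with one midpoint per edge, each midpoint
joined to the two endpoints of its edge. -/
def extGraph (G : SimpleGraph V) [DecidableRel G.Adj] :
    SimpleGraph (V ⊕ G.edgeFinset) where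
  Adj x y :=
    match x, y with
    | Sum.inl v, Sum.inr e => v ∈ (e : Sym2 V)
    | Sum.inr e, Sum.inl v => v ∈ (e : Sym2 V)
    | _, _ => False
  symm := ⟨by
    rintro (v | e) (w | f) h
    · exact h.elim
    · exact h
    · exact h
    · exact h.elim⟩
  loopless := ⟨by rintro (v | e) h <;> exact h.elim⟩

/-- The values of an extended configuration on the extended vertex set. -/
def extConf {G : SimpleGraph V} [DecidableRel G.Adj]
    (σ : V → Spin) (κ : G.edgeFinset → Mid) : V ⊕ G.edgeFinset → ℤ :=
  fun z => match z with
  | Sum.inl v => (σ v : ℤ)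
  | Sum.inr e => (κ e : ℤ)

/-- The disagreement set of a pair of extended configurations. -/
def DisSet {G : SimpleGraph V} [DecidableRel G.Adj]
    (σ : V → Spin) (κ : G.edgeFinset → Mid) (σ' : V → Spin) (κ' : G.edgeFinset → Mid) :
    Set (V ⊕ G.edgeFinset) :=
  {z | extConf σ κ z ≠ extConf σ' κ' z}

/-- `x` and `y` are connected by a path of `H` all of whose vertices lie in `D`. -/
def ConnectedIn {α : Type} (H : SimpleGraph α) (D : Set α) (x y : α) : Prop :=
  ∃ p : H.Walk x y, ∀ z ∈ p.support, z ∈ D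

end ExtendedModel
section Lattice

/-- The graph (ℓ¹) distance on `ℤ^d`. -/
def dist1 {d : ℕ} (u v : Fin d → ℤ) : ℤ := ∑ i, |u i - v i|

lemma dist1_comm {d : ℕ} (u v : Fin d → ℤ) : dist1 u v = dist1 v u :=
  Finset.sum_congr rfl fun _ _ => abs_sub_comm _ _

/-- The ball `Λ(L) = {v ∈ ℤ^d : d(0,v) ≤ L}` (for the graph distance) as a finite set. -/
def box (d L : ℕ) : Finset (Fin d → ℤ) :=
  (Finset.Icc (fun _ => -(L : ℤ)) (fun _ => (L : ℤ))).filter fun v => dist1 v 0 ≤ (L : ℤ)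

/-- The nearest-neighbor graph on a finite subset `Λ` of `ℤ^d`. -/
def latG (d : ℕ) (Λ : Finset (Fin d → ℤ)) : SimpleGraph Λ where
  Adj u v := dist1 (u : Fin d → ℤ) (v : Fin d → ℤ) = 1
  symm := ⟨fun u v h => by show dist1 (v : Fin d → ℤ) (u : Fin d → ℤ) = 1; rw [dist1_comm]; exact h⟩
  loopless := ⟨fun u h => by simp [dist1] at h⟩

instance {d : ℕ} {Λ : Finset (Fin d → ℤ)} : DecidableRel (latG d Λ).Adj :=
  fun u v => decidable_of_iff (dist1 (u : Fin d → ℤ) (v : Fin d → ℤ) = 1) Iff.rfl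

/-- The nearest neighbors of a point of `ℤ^d`. -/
def nbrs {d : ℕ} (v : Fin d → ℤ) : Finset (Fin d → ℤ) :=
  (Finset.univ.image fun i : Fin d => Function.update v i (v i + 1)) ∪
    (Finset.univ.image fun i : Fin d => Function.update v i (v i - 1))

/-- The internal vertex boundary `∂_v Λ` of a finite `Λ ⊂ ℤ^d`: points of `Λ` having a
nearest neighbor outside `Λ`. -/
def vbdry {d : ℕ} (Λ : Finset (Fin d → ℤ)) : Finset (Fin d → ℤ) :=
  Λ.filter fun v => ¬ nbrs v ⊆ Λ

/-- Restriction of a field on `ℤ^d` to `Λ`. -/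
def restF {d : ℕ} (Λ : Finset (Fin d → ℤ)) (η : (Fin d → ℤ) → ℝ) : Λ → ℝ := fun v => η ↑v

/-- A subset `A ⊆ ℤ^d` viewed inside `Λ`. -/
def inΛ {d : ℕ} (Λ A : Finset (Fin d → ℤ)) : Finset Λ :=
  Finset.univ.filter fun v => (v : Fin d → ℤ) ∈ A

/-- Thermal expectation of `f` in volume `Λ` with the spins on `A` frozen to the constant
value `τ`, at field realization `η`. -/
def thermalL (d : ℕ) (Λ : Finset (Fin d → ℤ)) (J h ε β : ℝ) (η : (Fin d → ℤ) → ℝ)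
    (A : Finset (Fin d → ℤ)) (τ : Spin) (f : (Λ → Spin) → ℝ) : ℝ :=
  thermalG (latG d Λ) J h ε β (restF Λ η) (inΛ Λ A) (fun _ => τ) f

/-- The i.i.d. standard Gaussian field on `Λ` (extended by `0` off `Λ`),
as a measure on fields on `ℤ^d`. -/
def fieldMeasure (d : ℕ) (Λ : Finset (Fin d → ℤ)) : Measure ((Fin d → ℤ) → ℝ) :=
  (Measure.pi fun _ : Λ => gaussianReal 0 1).map
    fun η v => if hv : v ∈ Λ then η ⟨v, hv⟩ else 0

/-- The spin at the origin, as an observable in volume `Λ`. -/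
def obs0 {d : ℕ} (Λ : Finset (Fin d → ℤ)) : (Λ → Spin) → ℝ :=
  fun σ => ∑ v : Λ, if (v : Fin d → ℤ) = 0 then spinR (σ v) else 0

/-- The order parameter
`m(L) = (1/2) 𝔼[⟨σ_0⟩_{Λ(L)}^+ - ⟨σ_0⟩_{Λ(L)}^-]` of the RFIM on `ℤ^d`. -/
def mOrd (d : ℕ) (J h ε β : ℝ) (L : ℕ) : ℝ :=
  ∫ η, (1/2) *
      (thermalL d (box d L) J h ε β η (vbdry (box d L)) pl (obs0 (box d L)) -
       thermalL d (box d L) J h ε β η (vbdry (box d L)) mn (obs0 (box d L)))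
    ∂ fieldMeasure d (box d L)

/-- The disagreement count
`D_{Λ₁,Λ₂}(η) = (1/2) ∑_{v ∈ Λ₁} [⟨σ_v⟩_{Λ₂}^+ - ⟨σ_v⟩_{Λ₂}^-]`. -/
def DL (d : ℕ) (Λ₁ Λ₂ : Finset (Fin d → ℤ)) (J h ε β : ℝ) (η : (Fin d → ℤ) → ℝ) : ℝ :=
  (1/2) * ∑ v : Λ₂,
    if (v : Fin d → ℤ) ∈ Λ₁ then
      thermalL d Λ₂ J h ε β η (vbdry Λ₂) pl (fun σ => spinR (σ v)) -
      thermalL d Λ₂ J h ε β η (vbdry Λ₂) mn (fun σ => spinR (σ v))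
    else 0

/-- The lattice partition function in volume `Λ` with spins constrained to `s₁` on `A₁`
and `s₂` on `A₂`. -/
def Z2L (d : ℕ) (Λ : Finset (Fin d → ℤ)) (J h ε β : ℝ) (η : (Fin d → ℤ) → ℝ)
    (A₁ A₂ : Finset (Fin d → ℤ)) (s₁ s₂ : Spin) : ℝ :=
  Z2G (latG d Λ) J h ε β (restF Λ η) (inΛ Λ A₁) (inΛ Λ A₂) s₁ s₂

/-- The lattice surface tension `T_{Λ₁,Λ₂}(η)`. -/
def surfT (d : ℕ) (Λ₁ Λ₂ : Finset (Fin d → ℤ)) (J h ε β : ℝ)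
    (η : (Fin d → ℤ) → ℝ) : ℝ :=
  β⁻¹ * Real.log
    ((Z2L d Λ₂ J h ε β η (vbdry Λ₁) (vbdry Λ₂) pl pl *
      Z2L d Λ₂ J h ε β η (vbdry Λ₁) (vbdry Λ₂) mn mn) /
     (Z2L d Λ₂ J h ε β η (vbdry Λ₁) (vbdry Λ₂) pl mn *
      Z2L d Λ₂ J h ε β η (vbdry Λ₁) (vbdry Λ₂) mn pl))

/-- Adding a uniform field of intensity `t` on `Λ`. -/
def shiftF {d : ℕ} (Λ : Finset (Fin d → ℤ)) (t : ℝ) (η : (Fin d → ℤ) → ℝ) :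
    (Fin d → ℤ) → ℝ :=
  fun v => if v ∈ Λ then η v + t else η v

end Lattice
section LatticeExtended

/-- Expectation under the product of the all-`τ` and all-`τ'` conditioned extended measures
in volume `Λ ⊂ ℤ^d`, with conditioning on `A`. -/
def extExp2L (d : ℕ) (Λ : Finset (Fin d → ℤ)) (J h ε β : ℝ) (η : (Fin d → ℤ) → ℝ)
    (A : Finset (Fin d → ℤ)) (τ τ' : Spin)
    (F : (Λ → Spin) → ((latG d Λ).edgeFinset → Mid) →
         (Λ → Spin) → ((latG d Λ).edgeFinset → Mid) → ℝ) : ℝ :=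
  extExp2 (latG d Λ) J h ε β (restF Λ η) (inΛ Λ A) (fun _ => τ) (fun _ => τ') F

/-- The annulus `𝒜_{1,2}(ℓ) = Λ(2ℓ) ∖ Λ(ℓ)` in `ℤ²`. -/
def ann (ℓ : ℕ) : Finset (Fin 2 → ℤ) := box 2 (2 * ℓ) \ box 2 ℓ

/-- The inner boundary of the annulus: its vertices with a neighbor in `Λ(ℓ)`. -/
def innerB (ℓ : ℕ) : Finset (Fin 2 → ℤ) :=
  (ann ℓ).filter fun v => (nbrs v ∩ box 2 ℓ).Nonempty

/-- The outer boundary of the annulus: its vertices with a neighbor outside `Λ(2ℓ)`. -/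
def outerB (ℓ : ℕ) : Finset (Fin 2 → ℤ) :=
  (ann ℓ).filter fun v => ¬ nbrs v ⊆ box 2 (2 * ℓ)

/-- The event that the (extended) annulus `𝒜_{1,2}(ℓ)` is crossed by a path of the
disagreement set of length (number of steps) at most `n`. -/
def crossPred (ℓ : ℕ) (n : ℝ)
    (σ : (ann ℓ) → Spin) (κ : (latG 2 (ann ℓ)).edgeFinset → Mid)
    (σ' : (ann ℓ) → Spin) (κ' : (latG 2 (ann ℓ)).edgeFinset → Mid) : Prop :=
  ∃ (a b : (ann ℓ : Finset (Fin 2 → ℤ))), (a : Fin 2 → ℤ) ∈ innerB ℓ ∧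
    (b : Fin 2 → ℤ) ∈ outerB ℓ ∧
    ∃ w : (extGraph (latG 2 (ann ℓ))).Walk (Sum.inl a) (Sum.inl b),
      (∀ z ∈ w.support, z ∈ DisSet σ κ σ' κ') ∧ (w.length : ℝ) ≤ n

/-- The annealed probability that the annulus `𝒜_{1,2}(ℓ)` is crossed by a disagreement
path of length at most `n`, under `plus/minus` boundary conditions on `∂_v 𝒜_{1,2}(ℓ)`. -/
def crossProb (J h ε β : ℝ) (ℓ : ℕ) (n : ℝ) : ℝ :=
  ∫ η, extExp2L 2 (ann ℓ) J h ε β η (vbdry (ann ℓ)) pl mn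
      (fun σ κ σ' κ' => if crossPred ℓ n σ κ σ' κ' then 1 else 0)
    ∂ fieldMeasure 2 (ann ℓ)

end LatticeExtended
section Lasso

/-- An extended vertex of `Λ̄` lies in the (extended) annulus `Λ(8ℓ) ∖ Λ(ℓ)`. -/
def extInAnn (ℓ : ℕ) (Λ : Finset (Fin 2 → ℤ)) :
    (Λ ⊕ (latG 2 Λ).edgeFinset) → Prop
  | Sum.inl v => (v : Fin 2 → ℤ) ∈ box 2 (8 * ℓ) \ box 2 ℓ
  | Sum.inr e => ∀ u ∈ (e : Sym2 (Λ : Finset (Fin 2 → ℤ))),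
      (u : Fin 2 → ℤ) ∈ box 2 (8 * ℓ) \ box 2 ℓ

/-- The lasso event `𝓛(ℓ)`: the union of connected components of the disagreement set in
`Λ̄(25ℓ)` meeting `∂_v Λ(25ℓ)` contains a circuit lying in the annulus `Λ(8ℓ) ∖ Λ(ℓ)`
which surrounds the inner hole (i.e. meets every extended path from `Λ(ℓ)` to
`∂_v Λ(25ℓ)`). -/
def lassoPred (ℓ : ℕ)
    (σ : (box 2 (25 * ℓ)) → Spin) (κ : (latG 2 (box 2 (25 * ℓ))).edgeFinset → Mid)
    (σ' : (box 2 (25 * ℓ)) → Spin) (κ' : (latG 2 (box 2 (25 * ℓ))).edgeFinset → Mid) :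
    Prop :=
  ∃ (x : (box 2 (25 * ℓ) : Finset (Fin 2 → ℤ)) ⊕ (latG 2 (box 2 (25 * ℓ))).edgeFinset)
    (w : (extGraph (latG 2 (box 2 (25 * ℓ)))).Walk x x),
      0 < w.length ∧
      (∀ z ∈ w.support, z ∈ DisSet σ κ σ' κ' ∧ extInAnn ℓ (box 2 (25 * ℓ)) z) ∧
      (∃ b : (box 2 (25 * ℓ) : Finset (Fin 2 → ℤ)), (b : Fin 2 → ℤ) ∈ vbdry (box 2 (25 * ℓ)) ∧
        ConnectedIn (extGraph (latG 2 (box 2 (25 * ℓ)))) (DisSet σ κ σ' κ') x (Sum.inl b)) ∧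
      (∀ (v b : (box 2 (25 * ℓ) : Finset (Fin 2 → ℤ))),
        (v : Fin 2 → ℤ) ∈ box 2 ℓ → (b : Fin 2 → ℤ) ∈ vbdry (box 2 (25 * ℓ)) →
        ∀ q : (extGraph (latG 2 (box 2 (25 * ℓ)))).Walk (Sum.inl v) (Sum.inl b),
          ∃ z ∈ q.support, z ∈ w.support)

/-- The quenched probability of the lasso event `𝓛(ℓ)` under the plus/minus product of
extended measures in `Λ(25ℓ)` with boundary conditions on `∂_v Λ(25ℓ)`. -/
def lassoExpect (J h ε β : ℝ) (ℓ : ℕ) (η : (Fin 2 → ℤ) → ℝ) : ℝ :=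
  extExp2L 2 (box 2 (25 * ℓ)) J h ε β η (vbdry (box 2 (25 * ℓ))) pl mn
    (fun σ κ σ' κ' => if lassoPred ℓ σ κ σ' κ' then 1 else 0)

/-- The annealed probability of the lasso event `𝓛(ℓ)`. -/
def lassoProb (J h ε β : ℝ) (ℓ : ℕ) : ℝ :=
  ∫ η, lassoExpect J h ε β ℓ η ∂ fieldMeasure 2 (box 2 (25 * ℓ))

end Lasso
section Rectangles

/-- Embedding of `ℤ²` into `ℝ²`. -/
def embL (v : Fin 2 → ℤ) : ℝ × ℝ := ((v 0 : ℝ), (v 1 : ℝ))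

/-- Embedding of the extended lattice into `ℝ²`: vertices to lattice points, midpoints of
edges to the midpoints of the corresponding segments. -/
def embEV {Λ : Finset (Fin 2 → ℤ)} :
    (Λ ⊕ (latG 2 Λ).edgeFinset) → ℝ × ℝ
  | Sum.inl v => embL (v : Fin 2 → ℤ)
  | Sum.inr e =>
      Sym2.lift ⟨fun u w : (Λ : Finset (Fin 2 → ℤ)) =>
          ((1 : ℝ) / 2) • (embL (u : Fin 2 → ℤ) + embL (w : Fin 2 → ℤ)),
        fun a b => by
          show ((1 : ℝ) / 2) • (embL (a : Fin 2 → ℤ) + embL (b : Fin 2 → ℤ)) =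
            ((1 : ℝ) / 2) • (embL (b : Fin 2 → ℤ) + embL (a : Fin 2 → ℤ))
          rw [add_comm]⟩ (e : Sym2 (Λ : Finset (Fin 2 → ℤ)))

/-- The union of the connected components of the disagreement set meeting `∂_v Λ`. -/
def bdryComp (Λ : Finset (Fin 2 → ℤ))
    (σ : Λ → Spin) (κ : (latG 2 Λ).edgeFinset → Mid)
    (σ' : Λ → Spin) (κ' : (latG 2 Λ).edgeFinset → Mid) :
    Set (Λ ⊕ (latG 2 Λ).edgeFinset) :=
  {z | ∃ b : (Λ : Finset (Fin 2 → ℤ)), (b : Fin 2 → ℤ) ∈ vbdry Λ ∧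
    ConnectedIn (extGraph (latG 2 Λ)) (DisSet σ κ σ' κ') z (Sum.inl b)}

/-- The polygonal curve in `ℝ²` associated with `𝒞_{∂_v Λ}`: the union of the straight
segments between embedded adjacent extended vertices of `𝒞_{∂_v Λ}`. -/
def curveSet (Λ : Finset (Fin 2 → ℤ))
    (σ : Λ → Spin) (κ : (latG 2 Λ).edgeFinset → Mid)
    (σ' : Λ → Spin) (κ' : (latG 2 Λ).edgeFinset → Mid) : Set (ℝ × ℝ) :=
  ⋃ (z ∈ bdryComp Λ σ κ σ' κ') (z' ∈ bdryComp Λ σ κ σ' κ')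
      (_ : (extGraph (latG 2 Λ)).Adj z z'),
    segment ℝ (embEV z) (embEV z')

/-- A rectangle in `ℝ²` of arbitrary orientation: a corner, a unit direction of the short
side, and the short side length `w` (the long side has length `5w`). -/
structure Rect where
  corner : ℝ × ℝ
  dir : ℝ × ℝ
  w : ℝ

/-- Rotation of a vector of `ℝ²` by `π/2`. -/
def perp (x : ℝ × ℝ) : ℝ × ℝ := (-x.2, x.1)

/-- The closed rectangle determined by the data of `R`. -/
def Rect.carrier (R : Rect) : Set (ℝ × ℝ) :=
  {x | ∃ s t : ℝ, 0 ≤ s ∧ s ≤ R.w ∧ 0 ≤ t ∧ t ≤ 5 * R.w ∧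
    x = R.corner + s • R.dir + t • perp R.dir}

/-- One of the two short sides of `R`. -/
def Rect.sideA (R : Rect) : Set (ℝ × ℝ) :=
  {x | ∃ s : ℝ, 0 ≤ s ∧ s ≤ R.w ∧ x = R.corner + s • R.dir}

/-- The other short side of `R`. -/
def Rect.sideB (R : Rect) : Set (ℝ × ℝ) :=
  {x | ∃ s : ℝ, 0 ≤ s ∧ s ≤ R.w ∧ x = R.corner + s • R.dir + (5 * R.w) • perp R.dir}

/-- The event `Cross(R)`: the curve associated to `𝒞_{∂_v Λ}` contains a continuous path,
staying in `R`, which connects the two short sides of `R`. -/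
def CrossR (Λ : Finset (Fin 2 → ℤ)) (R : Rect)
    (σ : Λ → Spin) (κ : (latG 2 Λ).edgeFinset → Mid)
    (σ' : Λ → Spin) (κ' : (latG 2 Λ).edgeFinset → Mid) : Prop :=
  ∃ γ : ℝ → ℝ × ℝ, ContinuousOn γ (Set.Icc 0 1) ∧
    (∀ t ∈ Set.Icc (0 : ℝ) 1, γ t ∈ curveSet Λ σ κ σ' κ' ∩ R.carrier) ∧
    γ 0 ∈ R.sideA ∧ γ 1 ∈ R.sideB

/-- A collection of rectangles is well-separated (at scale `ℓ`) if each has unit direction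
vector, aspect ratio `1 × 5` with `10 ≤ ℓ(R) ≤ ℓ/160`, lies in the open `ℓ¹`-annulus of radii
`(5/4)ℓ, (7/4)ℓ`, and distinct rectangles are at mutual `ℓ¹` distance at least
`60·max(ℓ(R₁), ℓ(R₂))`. -/
def WellSeparated (ℓ : ℕ) (ℛ : Finset Rect) : Prop :=
  ∀ R ∈ ℛ, (R.dir.1 ^ 2 + R.dir.2 ^ 2 = 1) ∧
    (10 ≤ R.w ∧ R.w ≤ (ℓ : ℝ) / 160) ∧
    (R.carrier ⊆ {x : ℝ × ℝ | 5 / 4 * (ℓ : ℝ) < |x.1| + |x.2| ∧ |x.1| + |x.2| < 7 / 4 * (ℓ : ℝ)}) ∧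
    ∀ R' ∈ ℛ, R ≠ R' → ∀ p ∈ R.carrier, ∀ q ∈ Rect.carrier R',
      60 * max R.w R'.w ≤ |p.1 - q.1| + |p.2 - q.2|

end Rectangles
section NonAnticipatory

variable {V : Type} [Fintype V] [DecidableEq V]

/-- The extended vertices of `Λ̄`: vertices of `Λ` and midpoints of edges with both
endpoints in `Λ`. -/
def extVerts (G : SimpleGraph V) [DecidableRel G.Adj] (Λ : Finset V) :
    Set (V ⊕ G.edgeFinset) :=
  {z | match z with
    | Sum.inl v => v ∈ Λ
    | Sum.inr e => ∀ u ∈ (e : Sym2 V), u ∈ Λ}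

/-- The forward set `S_F` of `S`: extended vertices outside `S` admitting a path of the
extended graph to `∂_v Λ₁` which is disjoint from `S`. -/
def fwdSet (G : SimpleGraph V) [DecidableRel G.Adj] (Λ₁ : Finset V)
    (S : Set (V ⊕ G.edgeFinset)) : Set (V ⊕ G.edgeFinset) :=
  {u | u ∉ S ∧ ∃ a : V, a ∈ vbdryG G Λ₁ ∧
    ∃ p : (extGraph G).Walk u (Sum.inl a), ∀ z ∈ p.support, z ∉ S}

/-- The backward set `S_B`: the complement of `S_F` in the extended vertex set of `Λ̄₂`. -/
def bwdSet (G : SimpleGraph V) [DecidableRel G.Adj] (Λ₁ Λ₂ : Finset V)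
    (S : Set (V ⊕ G.edgeFinset)) : Set (V ⊕ G.edgeFinset) :=
  extVerts G Λ₂ \ fwdSet G Λ₁ S

/-- `S` is a separating set (between `∂_v Λ₁` and `∂_v Λ₂`). -/
def Separating (G : SimpleGraph V) [DecidableRel G.Adj] (Λ₁ Λ₂ : Finset V)
    (S : Set (V ⊕ G.edgeFinset)) : Prop :=
  (∀ a ∈ vbdryG G Λ₁, Sum.inl a ∈ fwdSet G Λ₁ S) ∧
  (∀ b ∈ vbdryG G Λ₂, Sum.inl b ∈ bwdSet G Λ₁ Λ₂ S)

/-- A random set `𝒮` (a function of the pair of extended configurations) is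
non-anticipatory if, for every deterministic `S`, the event `{𝒮 = S}` is determined by
the restriction of the pair of configurations to `S_B`. -/
def NonAnticipatory (G : SimpleGraph V) [DecidableRel G.Adj] (Λ₁ Λ₂ : Finset V)
    (𝒮 : (V → Spin) → (G.edgeFinset → Mid) → (V → Spin) → (G.edgeFinset → Mid) →
      Set (V ⊕ G.edgeFinset)) : Prop :=
  ∀ (S : Set (V ⊕ G.edgeFinset))
    (σ₁ : V → Spin) (κ₁ : G.edgeFinset → Mid) (σ₁' : V → Spin) (κ₁' : G.edgeFinset → Mid)
    (σ₂ : V → Spin) (κ₂ : G.edgeFinset → Mid) (σ₂' : V → Spin) (κ₂' : G.edgeFinset → Mid),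
    (∀ z ∈ bwdSet G Λ₁ Λ₂ S,
      extConf σ₁ κ₁ z = extConf σ₂ κ₂ z ∧ extConf σ₁' κ₁' z = extConf σ₂' κ₂' z) →
    (𝒮 σ₁ κ₁ σ₁' κ₁' = S ↔ 𝒮 σ₂ κ₂ σ₂' κ₂' = S)

end NonAnticipatory
section Misc

variable {V : Type} [Fintype V] [DecidableEq V]

/-- `𝒞_S`: the union of the connected components of the disagreement set meeting
`{Sum.inl s : s ∈ S}`. -/
def compS (G : SimpleGraph V) [DecidableRel G.Adj] (S : Finset V)
    (σ : V → Spin) (κ : G.edgeFinset → Mid) (σ' : V → Spin) (κ' : G.edgeFinset → Mid) :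
    Set (V ⊕ G.edgeFinset) :=
  {z | ∃ s ∈ S, ConnectedIn (extGraph G) (DisSet σ κ σ' κ') z (Sum.inl s)}

/-- The swap map `R_S^A`: if `𝒞_S` meets `A` it is the identity, and otherwise it
exchanges the two configurations on `𝒞_S`. -/
def Rswap (G : SimpleGraph V) [DecidableRel G.Adj] (A S : Finset V)
    (σ : V → Spin) (κ : G.edgeFinset → Mid) (σ' : V → Spin) (κ' : G.edgeFinset → Mid) :
    ((V → Spin) × (G.edgeFinset → Mid)) × ((V → Spin) × (G.edgeFinset → Mid)) :=
  if ∃ a ∈ A, Sum.inl a ∈ compS G S σ κ σ' κ' then ((σ, κ), (σ', κ'))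
  else
    (((fun v => if Sum.inl v ∈ compS G S σ κ σ' κ' then σ' v else σ v),
      (fun e => if Sum.inr e ∈ compS G S σ κ σ' κ' then κ' e else κ e)),
     ((fun v => if Sum.inl v ∈ compS G S σ κ σ' κ' then σ v else σ' v),
      (fun e => if Sum.inr e ∈ compS G S σ κ σ' κ' then κ e else κ' e)))

/-- The number of vertices of `Λ₁` belonging to `𝒞_{∂_v Λ₂}`, i.e. `|Λ₁ ∩ 𝒞_{∂_v Λ₂}|`. -/
def connCount (Λ₁ Λ₂ : Finset (Fin 2 → ℤ))
    (σ : Λ₂ → Spin) (κ : (latG 2 Λ₂).edgeFinset → Mid)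
    (σ' : Λ₂ → Spin) (κ' : (latG 2 Λ₂).edgeFinset → Mid) : ℝ :=
  ∑ v : (Λ₂ : Finset (Fin 2 → ℤ)),
    if (v : Fin 2 → ℤ) ∈ Λ₁ ∧
        (∃ b : (Λ₂ : Finset (Fin 2 → ℤ)), (b : Fin 2 → ℤ) ∈ vbdry Λ₂ ∧
          ConnectedIn (extGraph (latG 2 Λ₂)) (DisSet σ κ σ' κ') (Sum.inl v) (Sum.inl b))
    then 1 else 0

/-- The standard Gaussian density `φ`. -/
def stdGauss (u : ℝ) : ℝ := (Real.sqrt (2 * Real.pi))⁻¹ * Real.exp (-(u ^ 2 / 2))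

/-- The two-sided standard Gaussian tail `χ(s) = 2 ∫_s^∞ φ(u) du`. -/
def chi (s : ℝ) : ℝ := 2 * ∫ u in Set.Ioi s, stdGauss u

/-- The translate `v + Λ` of a finite subset of `ℤ²`. -/
def trF {d : ℕ} (v : Fin d → ℤ) (Λ : Finset (Fin d → ℤ)) : Finset (Fin d → ℤ) :=
  Λ.image fun x => v + x

end Misc

/-!
The weight of an extended configuration is a product of factors `W(σ_v, κ_ę)`, one per incidence
of a vertex `v` with a midpoint `ę`, times single-site field factors. A Ḡ-neighbour of `𝒞_S` that
is not in `𝒞_S` lies outside the disagreement set, so at every incidence straddling the boundary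
of `𝒞_S` the outer site carries the same value in both configurations. Hence exchanging the two
configurations on `𝒞_S` preserves the product of their weights, and when `𝒞_S` avoids `A` it
also preserves both boundary conditions.
-/

lemma mul_ite_swap {α β M : Type*} [CommMonoid M] (W : α → β → M) {p q : Prop}
    [Decidable p] [Decidable q] {a a' : α} {b b' : β}
    (hb : p → ¬q → b = b') (ha : q → ¬p → a = a') :
    W (if p then a' else a) (if q then b' else b) *
        W (if p then a else a') (if q then b else b') = W a b * W a' b' := by
  by_cases hp : p <;> by_cases hq : q <;> simp_all [mul_comm]

lemma edgeW_mul_edgeW_congr {V : Type} (J β : ℝ) {σ₁ σ₂ σ₁' σ₂' : V → Spin}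
    {k₁ k₂ k₁' k₂' : ℤ} (e : Sym2 V)
    (he : ∀ u ∈ e,
      Wgt J β (σ₁ u) k₁ * Wgt J β (σ₂ u) k₂ = Wgt J β (σ₁' u) k₁' * Wgt J β (σ₂' u) k₂') :
    edgeW J β σ₁ k₁ e * edgeW J β σ₂ k₂ e = edgeW J β σ₁' k₁' e * edgeW J β σ₂' k₂' e := by
  induction e using Sym2.ind with
  | _ u v =>
    simp only [edgeW, Sym2.lift_mk]
    calc _ = (Wgt J β (σ₁ u) k₁ * Wgt J β (σ₂ u) k₂) *
            (Wgt J β (σ₁ v) k₁ * Wgt J β (σ₂ v) k₂) := by ring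
      _ = (Wgt J β (σ₁' u) k₁' * Wgt J β (σ₂' u) k₂') *
            (Wgt J β (σ₁' v) k₁' * Wgt J β (σ₂' v) k₂') := by
          rw [he u (Sym2.mem_mk_left u v), he v (Sym2.mem_mk_right u v)]
      _ = _ := by ring

section SwapInvariance

variable {V : Type} [Fintype V] {G : SimpleGraph V} [DecidableRel G.Adj]

lemma mem_compS_of_adj {S : Finset V} {σ : V → Spin} {κ : G.edgeFinset → Mid}
    {σ' : V → Spin} {κ' : G.edgeFinset → Mid} {x y : V ⊕ G.edgeFinset}
    (hx : x ∈ compS G S σ κ σ' κ') (hxy : (extGraph G).Adj x y)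
    (hy : y ∈ DisSet σ κ σ' κ') : y ∈ compS G S σ κ σ' κ' := by
  obtain ⟨s, hs, p, hp⟩ := hx
  refine ⟨s, hs, .cons hxy.symm p, fun z hz => ?_⟩
  rcases List.mem_cons.mp (SimpleGraph.Walk.support_cons _ _ ▸ hz) with rfl | hz
  exacts [hy, hp z hz]

lemma extConf_eq_of_adj_mem_compS {S : Finset V} {σ : V → Spin} {κ : G.edgeFinset → Mid}
    {σ' : V → Spin} {κ' : G.edgeFinset → Mid} {x y : V ⊕ G.edgeFinset}
    (hxy : (extGraph G).Adj x y) (hx : x ∈ compS G S σ κ σ' κ')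
    (hy : y ∉ compS G S σ κ σ' κ') : extConf σ κ y = extConf σ' κ' y :=
  not_not.mp fun hne => hy (mem_compS_of_adj hx hxy hne)

lemma extWeight_mul_extWeight (J h ε β : ℝ) (η : V → ℝ)
    (σ₁ : V → Spin) (κ₁ : G.edgeFinset → Mid) (σ₂ : V → Spin) (κ₂ : G.edgeFinset → Mid) :
    extWeight G J h ε β η σ₁ κ₁ * extWeight G J h ε β η σ₂ κ₂ =
      (∏ e : G.edgeFinset, edgeW J β σ₁ (κ₁ e) e * edgeW J β σ₂ (κ₂ e) e) *
        Real.exp (-(β * ∑ v, (h + ε * η v) * (spinR (σ₁ v) + spinR (σ₂ v)))) := by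
  simp only [extWeight, Finset.prod_mul_distrib, mul_add, Finset.sum_add_distrib, neg_add,
    Real.exp_add]
  ring

lemma extWeight_mul_swap (J h ε β : ℝ) (η : V → ℝ) (C : Set (V ⊕ G.edgeFinset))
    (σ : V → Spin) (κ : G.edgeFinset → Mid) (σ' : V → Spin) (κ' : G.edgeFinset → Mid)
    (hC : ∀ x y, (extGraph G).Adj x y → x ∈ C → y ∉ C → extConf σ κ y = extConf σ' κ' y) :
    extWeight G J h ε β η (fun v => if Sum.inl v ∈ C then σ' v else σ v)
        (fun e => if Sum.inr e ∈ C then κ' e else κ e) *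
      extWeight G J h ε β η (fun v => if Sum.inl v ∈ C then σ v else σ' v)
        (fun e => if Sum.inr e ∈ C then κ e else κ' e) =
    extWeight G J h ε β η σ κ * extWeight G J h ε β η σ' κ' := by
  rw [extWeight_mul_extWeight, extWeight_mul_extWeight]
  have hedge (e : G.edgeFinset) (u : V) (hu : u ∈ (e : Sym2 V)) :
      (extGraph G).Adj (Sum.inl u) (Sum.inr e) := hu
  congr 1
  · refine Finset.prod_congr rfl fun e _ =>
      edgeW_mul_edgeW_congr J β (e : Sym2 V) fun u hu => ?_
    exact mul_ite_swap (fun (s : Spin) (m : Mid) => Wgt J β s m)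
      (fun hu' he' => Subtype.ext (hC _ _ (hedge e u hu) hu' he'))
      (fun he' hu' => Subtype.ext (hC _ _ (hedge e u hu).symm he' hu'))
  · congr 3
    refine Finset.sum_congr rfl fun v _ => ?_
    split_ifs <;> ring

lemma extProb_mul_extProb_swap [DecidableEq V] (J h ε β : ℝ) (η : V → ℝ) (A S : Finset V)
    (τ τ' : V → Spin)
    (σ : V → Spin) (κ : G.edgeFinset → Mid) (σ' : V → Spin) (κ' : G.edgeFinset → Mid)
    (hA : ∀ a ∈ A, Sum.inl a ∉ compS G S σ κ σ' κ') :
    extProb G J h ε β η A τ (fun v => if Sum.inl v ∈ compS G S σ κ σ' κ' then σ' v else σ v)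
        (fun e => if Sum.inr e ∈ compS G S σ κ σ' κ' then κ' e else κ e) *
      extProb G J h ε β η A τ' (fun v => if Sum.inl v ∈ compS G S σ κ σ' κ' then σ v else σ' v)
        (fun e => if Sum.inr e ∈ compS G S σ κ σ' κ' then κ e else κ' e) =
    extProb G J h ε β η A τ σ κ * extProb G J h ε β η A τ' σ' κ' := by
  have hcond {ρ ρ' : V → Spin} (τ₀ : V → Spin) (hρ : ∀ a ∈ A, ρ a = ρ' a) :
      (∀ a ∈ A, ρ a = τ₀ a) ↔ ∀ a ∈ A, ρ' a = τ₀ a :=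
    forall₂_congr fun a ha => by rw [hρ a ha]
  simp only [extProb, div_mul_div_comm, ite_zero_mul_ite_zero]
  congr 1
  exact if_congr (and_congr (hcond τ fun a ha => if_neg (hA a ha))
      (hcond τ' fun a ha => if_neg (hA a ha)))
    (extWeight_mul_swap J h ε β η _ σ κ σ' κ' fun _ _ => extConf_eq_of_adj_mem_compS) rfl

end SwapInvariance

theorem swap_invariance_general
    {V : Type} [Fintype V] [DecidableEq V] (G : SimpleGraph V) [DecidableRel G.Adj]
    (J h ε β : ℝ) (η : V → ℝ)
    (A S : Finset V) (τ τ' : V → Spin) :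
    ∀ (σ : V → Spin) (κ : G.edgeFinset → Mid) (σ' : V → Spin) (κ' : G.edgeFinset → Mid),
      extProb G J h ε β η A τ (Rswap G A S σ κ σ' κ').1.1 (Rswap G A S σ κ σ' κ').1.2 *
        extProb G J h ε β η A τ' (Rswap G A S σ κ σ' κ').2.1 (Rswap G A S σ κ σ' κ').2.2 =
      extProb G J h ε β η A τ σ κ * extProb G J h ε β η A τ' σ' κ' := by
  intro σ κ σ' κ'
  by_cases hA : ∃ a ∈ A, Sum.inl a ∈ compS G S σ κ σ' κ'
  · rw [Rswap, if_pos hA]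
  · rw [Rswap, if_neg hA]
    exact extProb_mul_extProb_swap J h ε β η A S τ τ' σ κ σ' κ'
      fun a ha hmem => hA ⟨a, ha, hmem⟩

/-- **Invariance under the cluster swap** (Proposition 3.2): for any `A, S ⊆ V(G)` and
boundary values `τ, τ'` on `A`, the product measure `P̄^{A,τ} ⊗ P̄^{A,τ'}` is invariant
under the swap map `R_S^A` (which exchanges the two configurations on the union `𝒞_S` of
the disagreement components meeting `S`, unless `𝒞_S` meets `A`). -/
theorem swap_invariance
    {V : Type} [Fintype V] [DecidableEq V] (G : SimpleGraph V) [DecidableRel G.Adj]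
    (J h ε β : ℝ) (hJ : 0 < J) (hε : 0 < ε) (hβ : 0 < β) (η : V → ℝ)
    (A S : Finset V) (τ τ' : V → Spin) :
    ∀ (σ : V → Spin) (κ : G.edgeFinset → Mid) (σ' : V → Spin) (κ' : G.edgeFinset → Mid),
      extProb G J h ε β η A τ (Rswap G A S σ κ σ' κ').1.1 (Rswap G A S σ κ σ' κ').1.2 *
        extProb G J h ε β η A τ' (Rswap G A S σ κ σ' κ').2.1 (Rswap G A S σ κ σ' κ').2.2 =
      extProb G J h ε β η A τ σ κ * extProb G J h ε β η A τ' σ' κ' :=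
  swap_invariance_general G J h ε β η A S τ τ'
end RFIM
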